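/- arXiv:1805.12477 — 5 statements merged into one kernel-verified Lean document; each statement's English description precedes it below -/
import Mathlib

section
/- Let E be a finite set and let A be a symmetric E×E matrix over 𝔽₂ (the adjacency matrix of a framed graph on vertex set E). Then the nondegeneracy set system (E; Φ(A)), where Φ(A) = {U ⊆ E : the submatrix A|_U is invertible over 𝔽₂}, is a delta-matroid: it is proper (∅ ∈ Φ(A)) and satisfies the symmetric exchange axiom. -/
open Finset
open scoped symmDiff

variable {E : Type*} [Fintype E] [DecidableEq E]

/-- The symplectic vector space `V_E = (E → 𝔽₂) × (E → 𝔽₂)`. -/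
abbrev V (E : Type*) : Type _ := (E → ZMod 2) × (E → ZMod 2)

/-- Basis vector `e`. -/
def baseV (e : E) : V E := (Pi.single e 1, 0)

/-- Basis vector `e^∨`. -/
def dualV (e : E) : V E := (0, Pi.single e 1)

/-- The symplectic form on `V E`. -/
def omegaForm (u v : V E) : ZMod 2 := ∑ e, (u.1 e * v.2 e + u.2 e * v.1 e)

/-- A subspace is Lagrangian if the form vanishes on it and its dimension is `|E|`. -/
def IsLagrangian (L : Submodule (ZMod 2) (V E)) : Prop :=
  (∀ u ∈ L, ∀ v ∈ L, omegaForm u v = 0) ∧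
    Module.finrank (ZMod 2) L = Fintype.card E

/-- The span of `{e^∨ : e ∈ Y} ∪ {e : e ∈ E \ Y}`. -/
def coordSpan (Y : Finset E) : Submodule (ZMod 2) (V E) :=
  Submodule.span (ZMod 2)
    ((fun e => dualV e) '' (Y : Set E) ∪ (fun e => baseV e) '' ((Yᶜ : Finset E) : Set E))

/-- `Y` is feasible for `L` iff `L ∩ ⟨Y^∨ ⊔ (E \ Y)⟩ = 0`. -/
def Feasible (L : Submodule (ZMod 2) (V E)) (Y : Finset E) : Prop :=
  L ⊓ coordSpan Y = ⊥

/-- The set system `ν_E(L)`. -/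
def nu (L : Submodule (ZMod 2) (V E)) : Set (Finset E) := {Y | Feasible L Y}

/-- The nondegeneracy set system of a matrix `A`. -/
def Phi (A : Matrix E E (ZMod 2)) : Set (Finset E) :=
  {U : Finset E | IsUnit (A.submatrix (fun i : ↥U => (i : E)) (fun j : ↥U => (j : E))).det}

/-- The symmetric exchange axiom. -/
def SEAxiom (Φ : Set (Finset E)) : Prop :=
  ∀ φ₁ ∈ Φ, ∀ φ₂ ∈ Φ, ∀ e ∈ φ₁ ∆ φ₂, ∃ e' ∈ φ₁ ∆ φ₂, φ₁ ∆ ({e, e'} : Finset E) ∈ Φ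

/-- Binary delta-matroid: a twist of a nondegeneracy set system. -/
def IsBinaryDM (Φ : Set (Finset E)) : Prop :=
  ∃ (A : Matrix E E (ZMod 2)) (E' : Finset E), A.IsSymm ∧ Φ = (· ∆ E') '' Phi A

/-- The involution `σ_e` swapping `e` and `e^∨`. -/
def sigmaE (e : E) : V E →ₗ[ZMod 2] V E where
  toFun u := (fun f => if f = e then u.2 f else u.1 f, fun f => if f = e then u.1 f else u.2 f)
  map_add' u v := by ext f <;> dsimp <;> split <;> rfl
  map_smul' c u := by ext f <;> dsimp <;> split <;> rfl

/-- Composition of the `σ_e` over `e ∈ E'`. -/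
def sigmaSet (E' : Finset E) : V E →ₗ[ZMod 2] V E where
  toFun u := (fun f => if f ∈ E' then u.2 f else u.1 f, fun f => if f ∈ E' then u.1 f else u.2 f)
  map_add' u v := by ext f <;> dsimp <;> split <;> rfl
  map_smul' c u := by ext f <;> dsimp <;> split <;> rfl

/-- A Lagrangian subspace is graphic if for every `e` there is `v_e ∈ L` with
`ω(v_e,e)=1` and `ω(v_e,e')=0` for `e' ≠ e`. -/
def IsGraphic (L : Submodule (ZMod 2) (V E)) : Prop :=
  ∀ e : E, ∃ v ∈ L, omegaForm v (baseV e) = 1 ∧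
    ∀ e' : E, e' ≠ e → omegaForm v (baseV e') = 0

/-- The vector `e^∨ + Σ_{e'} A_{e,e'} e'`. -/
def rowVec (A : Matrix E E (ZMod 2)) (e : E) : V E := (A e, Pi.single e 1)

/-- The subspace spanned by the vectors `rowVec A e`, `e ∈ E`. -/
def graphOf (A : Matrix E E (ZMod 2)) : Submodule (ZMod 2) (V E) :=
  Submodule.span (ZMod 2) (Set.range (rowVec A))

/-- The first Vassiliev move: `e^∨ ↦ e^∨ + e'`, `e'^∨ ↦ e'^∨ + e`, fixing other basis vectors. -/
def vassiliev1 (e e' : E) : V E →ₗ[ZMod 2] V E where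
  toFun u := (fun f => u.1 f + (if f = e' then u.2 e else 0) + (if f = e then u.2 e' else 0), u.2)
  map_add' u v := by ext f <;> dsimp <;> split_ifs <;> ring
  map_smul' c u := by ext f <;> dsimp <;> split_ifs <;> ring

/-!
Principal pivoting: if `A|_S` is invertible, the principal pivot `B` of `A` on `S` is again
symmetric and `Φ(B) = Φ(A) Δ S`. Pivoting on `φ₁` thus reduces the exchange axiom to the case
`φ₁ = ∅`: given `W ∈ Φ(B)` and `e ∈ W`, either `B e e = 1` and `{e} ∈ Φ(B)`, or `B e e = 0` and,
the column of `e` in the invertible matrix `B|_W` being nonzero, some `e' ∈ W` has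
`B e' e = B e e' = 1`, so that `B|_{e, e'} = !![0, 1; 1, *]` is invertible.
-/

namespace Matrix

def rowPiecewise {m n α : Type*} [DecidableEq m] (S : Finset m) (A B : Matrix m n α) :
    Matrix m n α :=
  of fun i => if i ∈ S then A i else B i

@[simp]
theorem rowPiecewise_apply {m n α : Type*} [DecidableEq m] (S : Finset m) (A B : Matrix m n α)
    (i : m) (j : n) : rowPiecewise S A B i j = if i ∈ S then A i j else B i j := by
  simp only [rowPiecewise, of_apply]
  split_ifs <;> rfl

theorem rowPiecewise_mul {l m n α : Type*} [DecidableEq l] [Fintype m]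
    [NonUnitalNonAssocSemiring α] (S : Finset l) (A B : Matrix l m α) (C : Matrix m n α) :
    rowPiecewise S A B * C = rowPiecewise S (A * C) (B * C) := by
  ext i j
  by_cases hi : i ∈ S <;> simp [hi, mul_apply]

theorem rowPiecewise_mulVec {m n α : Type*} [DecidableEq m] [Fintype n]
    [NonUnitalNonAssocSemiring α] (S : Finset m) (A B : Matrix m n α) (c : n → α) :
    rowPiecewise S A B *ᵥ c = S.piecewise (A *ᵥ c) (B *ᵥ c) := by
  ext i
  by_cases hi : i ∈ S <;> simp [hi, mulVec]

section CommRing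

variable {n R : Type*} [Fintype n] [DecidableEq n] [CommRing R]

theorem det_rowPiecewise_one (S : Finset n) (A : Matrix n n R) :
    (rowPiecewise S A 1).det = (A.submatrix ((↑) : S → n) ((↑) : S → n)).det := by
  rw [twoBlockTriangular_det _ (· ∈ S)]
  · have h₁ : toSquareBlockProp (rowPiecewise S A 1) (· ∈ S) = A.submatrix (↑) (↑) := by
      ext i j
      simp [toSquareBlockProp_def]
    have h₂ : toSquareBlockProp (rowPiecewise S A 1) (· ∉ S) = 1 := by
      ext i j
      simp [toSquareBlockProp_def, one_apply, Subtype.ext_iff, i.2]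
    rw [h₁, h₂, det_one, mul_one]
    -- the two sides use different `Fintype ↥S` instances
    convert rfl
  · intro i hi j hj
    simp [hi, one_apply_ne (ne_of_mem_of_not_mem hj hi).symm]

/-- With `M = rowPiecewise S A 1` and `N = rowPiecewise S 1 A`, the graph `{(N c, M c)}` is the
graph `{(A c, c)}` of `A` with the coordinates in `S` exchanged; when `M` is invertible it is the
graph of `N M⁻¹`. -/
noncomputable def pivot (A : Matrix n n R) (S : Finset n) : Matrix n n R :=
  rowPiecewise S 1 A * (rowPiecewise S A 1)⁻¹

theorem rowPiecewise_pivot_mul {A : Matrix n n R} {S : Finset n}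
    (h : IsUnit (rowPiecewise S A 1).det) (Y : Finset n) :
    rowPiecewise Y (pivot A S) 1 * rowPiecewise S A 1 = rowPiecewise (Y ∆ S) A 1 := by
  rw [rowPiecewise_mul, pivot, nonsing_inv_mul_cancel_right _ _ h, one_mul]
  ext i j
  by_cases hY : i ∈ Y <;> by_cases hS : i ∈ S <;> simp [hY, hS, Finset.mem_symmDiff]

theorem transpose_rowPiecewise_mul_rowPiecewise [CharP R 2] {A : Matrix n n R} (hA : A.IsSymm)
    (S : Finset n) :
    (rowPiecewise S A 1)ᵀ * rowPiecewise S 1 A =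
      (rowPiecewise S 1 A)ᵀ * rowPiecewise S A 1 := by
  ext i j
  by_cases hi : i ∈ S <;> by_cases hj : j ∈ S <;>
    simp +contextual [mul_apply, ite_mul, mul_ite, one_apply, Finset.sum_ite, hi, hj,
      hA.apply i j, CharTwo.add_self_eq_zero]

theorem isSymm_pivot [CharP R 2] {A : Matrix n n R} (hA : A.IsSymm) {S : Finset n}
    (h : IsUnit (rowPiecewise S A 1).det) : (pivot A S).IsSymm := by
  set M := rowPiecewise S A 1
  set N := rowPiecewise S 1 A
  have hMt : IsUnit Mᵀ.det := by rwa [det_transpose]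
  rw [IsSymm, pivot, transpose_mul, transpose_nonsing_inv]
  calc Mᵀ⁻¹ * Nᵀ = Mᵀ⁻¹ * (Nᵀ * M) * M⁻¹ := by
        rw [Matrix.mul_assoc, Matrix.mul_assoc, mul_nonsing_inv _ h, Matrix.mul_one]
    _ = Mᵀ⁻¹ * (Mᵀ * N) * M⁻¹ := by rw [transpose_rowPiecewise_mul_rowPiecewise hA]
    _ = N * M⁻¹ := by rw [nonsing_inv_mul_cancel_left _ _ hMt]

end CommRing

end Matrix

open Matrix

section Phi

variable {n : Type*} [DecidableEq n]

theorem empty_mem_Phi (A : Matrix n n (ZMod 2)) : ∅ ∈ Phi A := by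
  simp [Phi]

theorem singleton_mem_Phi {A : Matrix n n (ZMod 2)} {e : n} (he : A e e ≠ 0) : {e} ∈ Phi A := by
  simp only [Phi, Set.mem_ofPred_eq, det_unique]
  exact isUnit_iff_ne_zero.2 he

variable [Fintype n]

theorem mem_Phi_iff_isUnit_det (A : Matrix n n (ZMod 2)) (U : Finset n) :
    U ∈ Phi A ↔ IsUnit (rowPiecewise U A 1).det := by
  rw [det_rowPiecewise_one]
  rfl

theorem mem_Phi_iff (A : Matrix n n (ZMod 2)) (U : Finset n) :
    U ∈ Phi A ↔ ∀ c, U.piecewise (A *ᵥ c) c = 0 → c = 0 := by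
  rw [mem_Phi_iff_isUnit_det, isUnit_iff_ne_zero, Ne, ← exists_mulVec_eq_zero_iff]
  simp only [rowPiecewise_mulVec, one_mulVec, not_exists, not_and', not_not]

theorem mem_Phi_pivot_iff {A : Matrix n n (ZMod 2)} {S : Finset n} (hS : S ∈ Phi A)
    (Y : Finset n) : Y ∈ Phi (pivot A S) ↔ Y ∆ S ∈ Phi A := by
  rw [mem_Phi_iff_isUnit_det] at hS ⊢
  rw [mem_Phi_iff_isUnit_det, ← rowPiecewise_pivot_mul hS, det_mul, IsUnit.mul_iff]
  exact (and_iff_left hS).symm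

theorem exists_mem_apply_ne_zero_of_mem_Phi {A : Matrix n n (ZMod 2)} {W : Finset n}
    (hW : W ∈ Phi A) {e : n} (he : e ∈ W) : ∃ e' ∈ W, A e' e ≠ 0 := by
  by_contra! h
  have hker := (mem_Phi_iff A W).1 hW (Pi.single e 1) <| by
    ext f
    by_cases hf : f ∈ W
    · simp [hf, h f hf]
    · simp [hf, (ne_of_mem_of_not_mem he hf).symm]
  simpa using congrFun hker e

theorem pair_mem_Phi {A : Matrix n n (ZMod 2)} {e e' : n} (hne : e ≠ e') (hee : A e e = 0)
    (hee' : A e e' ≠ 0) (he'e : A e' e ≠ 0) : {e, e'} ∈ Phi A := by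
  rw [mem_Phi_iff]
  intro c hc
  have hc_eq : c = Pi.single e (c e) + Pi.single e' (c e') := by
    ext f
    by_cases hfe : f = e
    · subst hfe
      simp [hne]
    by_cases hfe' : f = e'
    · subst hfe'
      simp [Ne.symm hne]
    simpa [hfe, hfe'] using congrFun hc f
  have hAc : ∀ f, (A *ᵥ c) f = A f e * c e + A f e' * c e' := by
    intro f
    rw [hc_eq]
    simp [mulVec_add, hne, Ne.symm hne, mul_comm]
  have hce' : c e' = 0 := by simpa [hAc, hee, hee'] using congrFun hc e
  have hce : c e = 0 := by simpa [hAc, hce', he'e] using congrFun hc e'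
  rw [hc_eq, hce, hce', Pi.single_zero, Pi.single_zero, add_zero]

theorem exists_pair_mem_Phi {A : Matrix n n (ZMod 2)} (hA : A.IsSymm) {W : Finset n}
    (hW : W ∈ Phi A) {e : n} (he : e ∈ W) : ∃ e' ∈ W, {e, e'} ∈ Phi A := by
  by_cases hee : A e e = 0
  · obtain ⟨e', he'W, he'e⟩ := exists_mem_apply_ne_zero_of_mem_Phi hW he
    have hne : e ≠ e' := by
      rintro rfl
      exact he'e hee
    exact ⟨e', he'W, pair_mem_Phi hne hee (hA.apply e e' ▸ he'e) he'e⟩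
  · exact ⟨e, he, by simpa using singleton_mem_Phi hee⟩

end Phi

/-- The nondegeneracy set system of a symmetric matrix over `𝔽₂` is a
delta-matroid: it is proper (`∅` is feasible) and satisfies the symmetric exchange axiom. -/
theorem stmt0 (A : Matrix E E (ZMod 2)) (hA : A.IsSymm) :
    (∅ : Finset E) ∈ Phi A ∧ SEAxiom (Phi A) := by
  refine ⟨empty_mem_Phi A, fun φ₁ h₁ φ₂ h₂ e he => ?_⟩
  have hpivot := mem_Phi_pivot_iff h₁
  have hB : (pivot A φ₁).IsSymm := isSymm_pivot hA ((mem_Phi_iff_isUnit_det A φ₁).1 h₁)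
  have hW : φ₁ ∆ φ₂ ∈ Phi (pivot A φ₁) := by
    rw [hpivot, symmDiff_comm, symmDiff_symmDiff_cancel_left]
    exact h₂
  obtain ⟨e', he', hpair⟩ := exists_pair_mem_Phi hB hW he
  exact ⟨e', he', by rwa [hpivot, symmDiff_comm] at hpair⟩
end

section
/- Let E be a finite set. The mapping ν_E, sending a Lagrangian subspace L ⊆ V_E to the set system (E; Ψ_L) with Ψ_L = {Y ⊆ E : L ∩ span({e^∨ : e ∈ Y} ∪ {e : e ∈ E \ Y}) = {0}}, is a bijection between the set 𝓛_E of Lagrangian subspaces of V_E and the set 𝓑_E of binary delta-matroids on the ground set E. -/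
open Finset
open scoped symmDiff

variable {E : Type*} [Fintype E] [DecidableEq E]

/-!
The twist `σ_{E'}` (swap `e` and `e^∨` for `e ∈ E'`) preserves `ω` and moves `coordSpan Y` onto
`coordSpan (Y ∆ E')`, so `ν(σ_{E'} L) = ν(L) ∆ E'`. The graph `{(A x, x)}` of a symmetric matrix
is Lagrangian, and `Y` is feasible for it exactly when `A|_Y` is invertible: `ν(graph A) = Φ(A)`.

Conversely, an isotropic `L` has a feasible set: take `Y` minimising `dim (L ∩ coordSpan Y)`;
if some `v ≠ 0` survives, toggling a coordinate `e` where `σ_Y v` is nonzero strictly shrinks the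
intersection, since `ω(·, v)` vanishes on `L`. For Lagrangian `L` and feasible `Y`, `σ_Y L` then
projects isomorphically onto the `e^∨`-coordinates, so it is the graph of a matrix, symmetric
because `L` is isotropic. Injectivity holds because the principal minors of order one and two
determine a symmetric matrix over `𝔽₂`.
-/

open scoped Matrix

lemma sigmaSet_apply {ι : Type*} [DecidableEq ι] (E' : Finset ι) (v : V ι) :
    sigmaSet E' v = (fun f => if f ∈ E' then v.2 f else v.1 f,
      fun f => if f ∈ E' then v.1 f else v.2 f) := rfl

lemma sigmaSet_sigmaSet {ι : Type*} [DecidableEq ι] (A B : Finset ι) (v : V ι) :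
    sigmaSet A (sigmaSet B v) = sigmaSet (A ∆ B) v := by
  ext f <;> simp only [sigmaSet_apply, Finset.mem_symmDiff] <;> by_cases f ∈ A <;>
    by_cases f ∈ B <;> simp_all

lemma sigmaSet_involutive {ι : Type*} [DecidableEq ι] (E' : Finset ι) :
    Function.Involutive (sigmaSet E') := fun v => by
  rw [sigmaSet_sigmaSet, symmDiff_self, Finset.bot_eq_empty]
  ext f <;> simp [sigmaSet_apply]

def sigmaEquiv {ι : Type*} [DecidableEq ι] (E' : Finset ι) : V ι ≃ₗ[ZMod 2] V ι :=
  LinearEquiv.ofInvolutive (sigmaSet E') (sigmaSet_involutive E')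

lemma coe_sigmaEquiv {ι : Type*} [DecidableEq ι] (E' : Finset ι) :
    (sigmaEquiv E' : V ι →ₗ[ZMod 2] V ι) = sigmaSet E' := rfl

lemma sum_baseV_add_dualV (v : V E) : ∑ e, (v.1 e • baseV e + v.2 e • dualV e) = v := by
  ext f <;> simp [baseV, dualV, Prod.fst_sum, Prod.snd_sum, Finset.sum_apply, Pi.single_apply]

lemma mem_coordSpan {Y : Finset E} {v : V E} : v ∈ coordSpan Y ↔ (sigmaSet Y v).2 = 0 := by
  suffices coordSpan Y = LinearMap.ker (LinearMap.snd _ _ _ ∘ₗ sigmaSet Y) by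
    rw [this]; rfl
  apply le_antisymm
  · rw [coordSpan, Submodule.span_le]
    rintro _ (⟨e, he, rfl⟩ | ⟨e, he, rfl⟩) <;> ext f <;> by_cases hf : f = e <;>
      simp_all [sigmaSet_apply, baseV, dualV]
  · intro v hv
    have hv : ∀ e, (if e ∈ Y then v.1 e else v.2 e) = 0 := fun e => congrFun hv e
    rw [← sum_baseV_add_dualV v]
    refine Submodule.sum_mem _ fun e _ => ?_
    by_cases he : e ∈ Y
    · have h1 : v.1 e = 0 := by simpa [he] using hv e
      rw [h1, zero_smul, zero_add]
      exact Submodule.smul_mem _ _ (Submodule.subset_span (Or.inl ⟨e, he, rfl⟩))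
    · have h2 : v.2 e = 0 := by simpa [he] using hv e
      rw [h2, zero_smul, add_zero]
      exact Submodule.smul_mem _ _ (Submodule.subset_span (Or.inr ⟨e, by simpa using he, rfl⟩))

lemma comap_sigmaSet_coordSpan (E' Y : Finset E) :
    (coordSpan Y).comap (sigmaSet E') = coordSpan (Y ∆ E') := by
  ext v
  simp [mem_coordSpan, sigmaSet_sigmaSet]

lemma feasible_map_sigmaSet (E' Y : Finset E) (L : Submodule (ZMod 2) (V E)) :
    Feasible (L.map (sigmaSet E')) Y ↔ Feasible L (Y ∆ E') := by
  rw [Feasible, Submodule.map_inf_eq_map_inf_comap, comap_sigmaSet_coordSpan,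
    ← coe_sigmaEquiv, Submodule.map_eq_bot_iff, Feasible]

lemma nu_map_sigmaSet (E' : Finset E) (L : Submodule (ZMod 2) (V E)) :
    nu (L.map (sigmaSet E')) = (· ∆ E') '' nu L := by
  rw [(symmDiff_left_involutive E').image_eq_preimage_symm]
  ext Y
  exact feasible_map_sigmaSet E' Y L

lemma omegaForm_eq_dotProduct {ι : Type*} [Fintype ι] (u v : V ι) :
    omegaForm u v = u.1 ⬝ᵥ v.2 + u.2 ⬝ᵥ v.1 :=
  Finset.sum_add_distrib

lemma omegaForm_sigmaSet (E' : Finset E) (u v : V E) :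
    omegaForm (sigmaSet E' u) (sigmaSet E' v) = omegaForm u v :=
  Finset.sum_congr rfl fun e _ => by simp only [sigmaSet_apply]; split <;> ring

lemma isLagrangian_map_sigmaSet (E' : Finset E) {L : Submodule (ZMod 2) (V E)}
    (hL : IsLagrangian L) : IsLagrangian (L.map (sigmaSet E')) := by
  refine ⟨?_, by rw [← coe_sigmaEquiv, LinearEquiv.finrank_map_eq, hL.2]⟩
  rintro _ ⟨u, hu, rfl⟩ _ ⟨v, hv, rfl⟩
  exact (omegaForm_sigmaSet E' u v).trans (hL.1 u hu v hv)

lemma graphOf_eq_range (A : Matrix E E (ZMod 2)) :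
    graphOf A = LinearMap.range (Aᵀ.mulVecLin.prod LinearMap.id) := by
  rw [graphOf, ← Fintype.range_linearCombination]
  congr 1
  ext e : 2
  simp [rowVec, Fintype.linearCombination_apply_single]
  rfl

lemma mem_graphOf {A : Matrix E E (ZMod 2)} (hA : A.IsSymm) {v : V E} :
    v ∈ graphOf A ↔ v.1 = A *ᵥ v.2 := by
  rw [graphOf_eq_range, hA.eq]
  constructor
  · rintro ⟨x, rfl⟩
    rfl
  · intro h
    exact ⟨v.2, Prod.ext h.symm rfl⟩

lemma finrank_graphOf (A : Matrix E E (ZMod 2)) :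
    Module.finrank (ZMod 2) (graphOf A) = Fintype.card E := by
  rw [graphOf_eq_range, LinearMap.finrank_range_of_inj, Module.finrank_fintype_fun_eq_card]
  exact fun x y hxy => congrArg Prod.snd hxy

lemma isLagrangian_graphOf {A : Matrix E E (ZMod 2)} (hA : A.IsSymm) :
    IsLagrangian (graphOf A) := by
  refine ⟨fun u hu v hv => ?_, finrank_graphOf A⟩
  have hAdot : ∀ x y : E → ZMod 2, A *ᵥ x ⬝ᵥ y = x ⬝ᵥ A *ᵥ y := fun x y => by
    rw [Matrix.dotProduct_mulVec, ← Matrix.mulVec_transpose, hA.eq, dotProduct_comm]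
  rw [omegaForm_eq_dotProduct, (mem_graphOf hA).1 hu, (mem_graphOf hA).1 hv, hAdot]
  exact CharTwo.add_self_eq_zero _

lemma submatrix_mulVec_restrict {ι R : Type*} [Fintype ι] [NonUnitalNonAssocSemiring R]
    (A : Matrix ι ι R) (Y : Finset ι) {x : ι → R} (hx : ∀ e ∉ Y, x e = 0) (i : Y) :
    (A.submatrix ((↑) : Y → ι) (↑) *ᵥ fun j : Y => x j) i = (A *ᵥ x) i := by
  simp only [Matrix.mulVec, dotProduct, Matrix.submatrix_apply]
  rw [Finset.sum_coe_sort Y (fun j => A i j * x j)]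
  exact Finset.sum_subset (Finset.subset_univ Y) fun j _ hj => by simp [hx j hj]

lemma isUnit_det_submatrix_iff {ι K : Type*} [Fintype ι] [DecidableEq ι] [Field K]
    (A : Matrix ι ι K) (Y : Finset ι) :
    IsUnit (A.submatrix ((↑) : Y → ι) (↑)).det ↔
      ∀ x : ι → K, (∀ e ∉ Y, x e = 0) → (∀ e ∈ Y, (A *ᵥ x) e = 0) → x = 0 := by
  rw [← Matrix.isUnit_iff_isUnit_det, ← Matrix.mulVec_injective_iff_isUnit,
    ← Matrix.coe_mulVecLin, injective_iff_map_eq_zero]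
  constructor
  · intro h x hx hAx
    have hz := h _ (funext fun i => (submatrix_mulVec_restrict A Y hx i).trans (hAx i i.2))
    funext e
    by_cases he : e ∈ Y
    · exact congrFun hz ⟨e, he⟩
    · exact hx e he
  · intro h z hz
    set x : ι → K := fun e => if he : e ∈ Y then z ⟨e, he⟩ else 0
    have hx : ∀ e ∉ Y, x e = 0 := fun e he => dif_neg he
    have hxz : (fun j : Y => x j) = z := funext fun j => dif_pos j.2
    have h0 := h x hx fun e he => by
      rw [← submatrix_mulVec_restrict A Y hx ⟨e, he⟩, hxz]
      exact congrFun hz _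
    rw [← hxz, h0]
    rfl

lemma feasible_graphOf_iff {A : Matrix E E (ZMod 2)} (hA : A.IsSymm) (Y : Finset E) :
    Feasible (graphOf A) Y ↔ Y ∈ Phi A := by
  have hC : ∀ x : E → ZMod 2, (A *ᵥ x, x) ∈ coordSpan Y ↔
      (∀ e ∉ Y, x e = 0) ∧ ∀ e ∈ Y, (A *ᵥ x) e = 0 := fun x => by
    simp only [mem_coordSpan, sigmaSet_apply, funext_iff, Pi.zero_apply]
    exact ⟨fun h => ⟨fun e he => by simpa [he] using h e, fun e he => by simpa [he] using h e⟩,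
      fun h e => by by_cases he : e ∈ Y <;> simp [he, h.1, h.2]⟩
  rw [Phi, Set.mem_ofPred_eq, isUnit_det_submatrix_iff, Feasible, Submodule.eq_bot_iff]
  constructor
  · intro h x hx hAx
    exact congrArg Prod.snd
      (h _ (Submodule.mem_inf.2 ⟨(mem_graphOf hA).2 rfl, (hC x).2 ⟨hx, hAx⟩⟩))
  · intro h v hv
    obtain ⟨hvG, hvC⟩ := Submodule.mem_inf.1 hv
    rw [mem_graphOf hA] at hvG
    rw [← Prod.mk.eta (p := v), hvG] at hvC ⊢
    obtain ⟨hx, hAx⟩ := (hC v.2).1 hvC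
    rw [h v.2 hx hAx, Matrix.mulVec_zero]
    rfl

lemma exists_inf_coordSpan_symmDiff_lt {L : Submodule (ZMod 2) (V E)}
    (hiso : ∀ u ∈ L, ∀ v ∈ L, omegaForm u v = 0) {Y : Finset E} (hY : ¬ Feasible L Y) :
    ∃ e, L ⊓ coordSpan (Y ∆ {e}) < L ⊓ coordSpan Y := by
  obtain ⟨v, hv, hv0⟩ := Submodule.exists_mem_ne_zero_of_ne_bot hY
  obtain ⟨hvL, hvC⟩ := Submodule.mem_inf.1 hv
  rw [mem_coordSpan] at hvC
  obtain ⟨e, he⟩ : ∃ e, (sigmaSet Y v).1 e ≠ 0 := by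
    by_contra! h
    refine hv0 ((sigmaSet_involutive Y).injective ?_)
    rw [map_zero]
    exact Prod.ext (funext h) hvC
  have hsigma : ∀ x, sigmaSet (Y ∆ {e}) x = sigmaSet {e} (sigmaSet Y x) := fun x => by
    rw [sigmaSet_sigmaSet, symmDiff_comm]
  refine ⟨e, lt_of_le_of_ne (fun x hx => ?_) fun h => ?_⟩
  · obtain ⟨hxL, hxC⟩ := Submodule.mem_inf.1 hx
    rw [mem_coordSpan, hsigma] at hxC
    have hxC : ∀ f, (if f = e then (sigmaSet Y x).1 f else (sigmaSet Y x).2 f) = 0 := by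
      simpa [sigmaSet_apply, funext_iff] using hxC
    have hx2 : ∀ f ≠ e, (sigmaSet Y x).2 f = 0 := fun f hf => by simpa [hf] using hxC f
    -- only the `e`-th term of `ω(σ_Y x, σ_Y v)` survives, and `ω(x, v) = 0`
    have hx2e : (sigmaSet Y x).2 e = 0 := by
      have h0 := hiso x hxL v hvL
      rw [← omegaForm_sigmaSet Y, omegaForm_eq_dotProduct, hvC, dotProduct_zero, zero_add,
        dotProduct, Finset.sum_eq_single e (fun f _ hf => by rw [hx2 f hf, zero_mul])
          (by simp)] at h0
      exact (mul_eq_zero.1 h0).resolve_right he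
    refine Submodule.mem_inf.2 ⟨hxL, mem_coordSpan.2 (funext fun f => ?_)⟩
    by_cases hf : f = e
    · rw [hf, hx2e]; rfl
    · exact hx2 f hf
  · obtain ⟨-, hvC'⟩ := Submodule.mem_inf.1 (h ▸ hv)
    rw [mem_coordSpan, hsigma] at hvC'
    exact he (by simpa [sigmaSet_apply] using congrFun hvC' e)

lemma exists_feasible {L : Submodule (ZMod 2) (V E)}
    (hiso : ∀ u ∈ L, ∀ v ∈ L, omegaForm u v = 0) : ∃ Y, Feasible L Y := by
  obtain ⟨Y, -, hmin⟩ := Finset.exists_min_image Finset.univ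
    (fun Y => Module.finrank (ZMod 2) ↥(L ⊓ coordSpan Y)) Finset.univ_nonempty
  refine ⟨Y, by_contra fun hY => ?_⟩
  obtain ⟨e, he⟩ := exists_inf_coordSpan_symmDiff_lt hiso hY
  exact (Submodule.finrank_lt_finrank_of_lt he).not_ge (hmin _ (Finset.mem_univ _))

lemma exists_isSymm_eq_graphOf {L : Submodule (ZMod 2) (V E)} (hL : IsLagrangian L)
    (h0 : Feasible L ∅) : ∃ A : Matrix E E (ZMod 2), A.IsSymm ∧ L = graphOf A := by
  let π : L →ₗ[ZMod 2] E → ZMod 2 := (LinearMap.snd _ _ _).comp L.subtype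
  have hinj : Function.Injective π := by
    rw [← LinearMap.ker_eq_bot, LinearMap.ker_eq_bot']
    rintro ⟨v, hv⟩ hv2
    have hvC : v ∈ L ⊓ coordSpan ∅ :=
      Submodule.mem_inf.2
        ⟨hv, mem_coordSpan.2 (by simpa [sigmaSet_apply] using show v.2 = 0 from hv2)⟩
    rw [h0] at hvC
    exact Subtype.ext ((Submodule.mem_bot _).1 hvC)
  have hsurj : Function.Surjective π :=
    (LinearMap.injective_iff_surjective_of_finrank_eq_finrank
      (by rw [hL.2, Module.finrank_fintype_fun_eq_card])).1 hinj
  choose w hw using fun e => hsurj (Pi.single e 1)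
  let A : Matrix E E (ZMod 2) := fun e => (w e : V E).1
  have hrow : ∀ e, rowVec A e = w e := fun e => Prod.ext rfl (hw e).symm
  have hA : A.IsSymm := Matrix.IsSymm.ext fun e f => by
    have h := hL.1 _ (w e).2 _ (w f).2
    rw [← hrow, ← hrow, omegaForm_eq_dotProduct] at h
    simp only [rowVec, dotProduct_single, single_dotProduct, mul_one, one_mul] at h
    exact (CharTwo.add_eq_zero.1 h).symm
  refine ⟨A, hA, (Submodule.eq_of_le_of_finrank_eq ?_ (by rw [finrank_graphOf, hL.2])).symm⟩
  rw [graphOf, Submodule.span_le]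
  rintro _ ⟨e, rfl⟩
  rw [hrow]
  exact (w e).2

lemma det_submatrix_singleton {ι R : Type*} [DecidableEq ι] [CommRing R] (A : Matrix ι ι R)
    (e : ι) : (A.submatrix ((↑) : ({e} : Finset ι) → ι) (↑)).det = A e e :=
  Matrix.det_unique _

def pairEquiv {ι : Type*} [DecidableEq ι] {e f : ι} (hef : e ≠ f) :
    Fin 2 ≃ ({e, f} : Finset ι) where
  toFun := ![⟨e, by simp⟩, (⟨f, by simp⟩ : ({e, f} : Finset ι))]
  invFun x := if (x : ι) = e then 0 else 1
  left_inv i := by fin_cases i <;> simp [hef.symm]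
  right_inv := by
    rintro ⟨x, hx⟩
    rcases Finset.mem_insert.1 hx with rfl | hx
    · simp
    · obtain rfl := Finset.mem_singleton.1 hx
      simp [hef.symm]

lemma det_submatrix_pair {ι R : Type*} [DecidableEq ι] [CommRing R] (A : Matrix ι ι R)
    {e f : ι} (hef : e ≠ f) :
    (A.submatrix ((↑) : ({e, f} : Finset ι) → ι) (↑)).det = A e e * A f f - A e f * A f e := by
  rw [← Matrix.det_submatrix_equiv_self (pairEquiv hef), Matrix.det_fin_two]
  simp [pairEquiv]

lemma ZMod.two_eq_of_isUnit_iff : ∀ a b : ZMod 2, (IsUnit a ↔ IsUnit b) → a = b := by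
  simp only [isUnit_iff_ne_zero]
  decide

lemma ZMod.two_eq_of_isUnit_sub_mul_self_iff :
    ∀ c a b : ZMod 2, (IsUnit (c - a * a) ↔ IsUnit (c - b * b)) → a = b := by
  simp only [isUnit_iff_ne_zero]
  decide

lemma Matrix.IsSymm.eq_of_Phi_eq {ι : Type*} [DecidableEq ι] {A B : Matrix ι ι (ZMod 2)}
    (hA : A.IsSymm) (hB : B.IsSymm) (h : Phi A = Phi B) : A = B := by
  have hdiag (e : ι) : A e e = B e e := by
    have := Set.ext_iff.1 h {e}
    simp only [Phi, Set.mem_ofPred_eq, det_submatrix_singleton] at this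
    exact ZMod.two_eq_of_isUnit_iff _ _ this
  ext e f
  by_cases hef : e = f
  · rw [hef, hdiag]
  · have := Set.ext_iff.1 h {e, f}
    simp only [Phi, Set.mem_ofPred_eq, det_submatrix_pair _ hef, hA.apply e f, hB.apply e f,
      hdiag] at this
    exact ZMod.two_eq_of_isUnit_sub_mul_self_iff _ _ _ this

lemma nu_map_sigmaSet_graphOf (E' : Finset E) {A : Matrix E E (ZMod 2)} (hA : A.IsSymm) :
    nu ((graphOf A).map (sigmaSet E')) = (· ∆ E') '' Phi A := by
  rw [nu_map_sigmaSet]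
  congr 1
  ext Y
  exact feasible_graphOf_iff hA Y

lemma exists_map_sigmaSet_eq_graphOf {L : Submodule (ZMod 2) (V E)} (hL : IsLagrangian L)
    {Y : Finset E} (hY : Feasible L Y) :
    ∃ A : Matrix E E (ZMod 2), A.IsSymm ∧ L = (graphOf A).map (sigmaSet Y) := by
  have h0 : Feasible (L.map (sigmaSet Y)) ∅ := by
    rwa [feasible_map_sigmaSet, ← Finset.bot_eq_empty, bot_symmDiff]
  obtain ⟨A, hA, hLA⟩ := exists_isSymm_eq_graphOf (isLagrangian_map_sigmaSet Y hL) h0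
  refine ⟨A, hA, ?_⟩
  have hσσ : sigmaSet Y ∘ₗ sigmaSet Y = LinearMap.id := LinearMap.ext (sigmaSet_involutive Y)
  rw [← hLA, ← Submodule.map_comp, hσσ, Submodule.map_id]

/-- `ν_E` is a bijection between Lagrangian subspaces of `V_E` and binary
delta-matroids on the ground set `E`. -/
theorem stmt2 :
    Set.BijOn (fun L => nu L)
      {L : Submodule (ZMod 2) (V E) | IsLagrangian L}
      {Φ : Set (Finset E) | IsBinaryDM Φ} := by
  refine ⟨fun L hL => ?_, fun L₁ hL₁ L₂ hL₂ hnu => ?_, ?_⟩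
  · obtain ⟨Y, hY⟩ := exists_feasible hL.1
    obtain ⟨A, hA, rfl⟩ := exists_map_sigmaSet_eq_graphOf hL hY
    exact ⟨A, Y, hA, nu_map_sigmaSet_graphOf Y hA⟩
  · obtain ⟨Y, hY⟩ := exists_feasible hL₁.1
    have hY₂ : Feasible L₂ Y := (Set.ext_iff.1 hnu Y).1 hY
    obtain ⟨A₁, hA₁, rfl⟩ := exists_map_sigmaSet_eq_graphOf hL₁ hY
    obtain ⟨A₂, hA₂, rfl⟩ := exists_map_sigmaSet_eq_graphOf hL₂ hY₂
    simp only [nu_map_sigmaSet_graphOf Y hA₁, nu_map_sigmaSet_graphOf Y hA₂] at hnu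
    rw [hA₁.eq_of_Phi_eq hA₂ (Set.image_injective.2 (symmDiff_left_injective Y) hnu)]
  · rintro Φ ⟨A, E', hA, rfl⟩
    exact ⟨_, isLagrangian_map_sigmaSet E' (isLagrangian_graphOf hA),
      nu_map_sigmaSet_graphOf E' hA⟩
end

section
/- Let E be a finite set, L ⊆ V_E a Lagrangian subspace, and e ∈ E. Then ν_E(L * e) = ν_E(L) * {e}: the set system associated to the twisted Lagrangian subspace L * e equals the twist by {e} of the set system associated to L. In other words, Y ⊆ E is feasible for ν_E(L * e) if and only if Y Δ {e} is feasible for ν_E(L). -/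
open Finset
open scoped symmDiff

variable {E : Type*} [Fintype E] [DecidableEq E]

/-! `σ_e` is a linear involution carrying the coordinate span of `Y ∆ {e}` onto that of `Y`,
hence carrying `L ⊓ coordSpan (Y ∆ {e})` onto `σ_e L ⊓ coordSpan Y`; one is zero iff the other is. -/

omit [Fintype E] in
lemma sigmaE_involutive (e : E) : Function.Involutive (sigmaE e) := by
  intro u
  ext f <;> by_cases h : f = e <;> simp [sigmaE, h]

omit [Fintype E] in
lemma sigmaE_injective (e : E) : Function.Injective (sigmaE e) :=
  (sigmaE_involutive e).injective

omit [Fintype E] in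
lemma sigmaE_dualV (e f : E) :
    sigmaE e (dualV f) = if f = e then baseV e else dualV f := by
  rcases eq_or_ne f e with rfl | h
  · ext g <;> by_cases hg : g = f <;> simp [sigmaE, dualV, baseV, hg]
  · ext g <;> by_cases hg : g = e <;> simp [sigmaE, dualV, h, h.symm, hg, Pi.single_apply]

omit [Fintype E] in
lemma sigmaE_baseV (e f : E) :
    sigmaE e (baseV f) = if f = e then dualV e else baseV f := by
  rcases eq_or_ne f e with rfl | h
  · ext g <;> by_cases hg : g = f <;> simp [sigmaE, dualV, baseV, hg]
  · ext g <;> by_cases hg : g = e <;> simp [sigmaE, baseV, h, h.symm, hg, Pi.single_apply]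

lemma dualV_mem_coordSpan {Y : Finset E} {f : E} (hf : f ∈ Y) : dualV f ∈ coordSpan Y :=
  Submodule.subset_span (Or.inl ⟨f, hf, rfl⟩)

lemma baseV_mem_coordSpan {Y : Finset E} {f : E} (hf : f ∉ Y) : baseV f ∈ coordSpan Y :=
  Submodule.subset_span (Or.inr ⟨f, by simpa using hf, rfl⟩)

lemma map_sigmaE_coordSpan_le (e : E) (Y : Finset E) :
    (coordSpan (Y ∆ {e})).map (sigmaE e) ≤ coordSpan Y := by
  rw [coordSpan, Submodule.map_span, Submodule.span_le]
  rintro _ ⟨_, ⟨f, hf, rfl⟩ | ⟨f, hf, rfl⟩, rfl⟩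
  · rw [sigmaE_dualV]
    split_ifs with h
    · subst h
      exact baseV_mem_coordSpan (by simpa [Finset.mem_symmDiff] using Finset.mem_coe.1 hf)
    · exact dualV_mem_coordSpan (by simpa [Finset.mem_symmDiff, h] using Finset.mem_coe.1 hf)
  · rw [sigmaE_baseV]
    split_ifs with h
    · subst h
      exact dualV_mem_coordSpan (by simpa [Finset.mem_symmDiff] using Finset.mem_coe.1 hf)
    · exact baseV_mem_coordSpan (by simpa [Finset.mem_symmDiff, h] using Finset.mem_coe.1 hf)

lemma map_sigmaE_coordSpan (e : E) (Y : Finset E) :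
    (coordSpan (Y ∆ {e})).map (sigmaE e) = coordSpan Y := by
  refine le_antisymm (map_sigmaE_coordSpan_le e Y) ?_
  have h := Submodule.map_mono (f := sigmaE e) (map_sigmaE_coordSpan_le e (Y ∆ {e}))
  rwa [symmDiff_symmDiff_cancel_right, ← Submodule.map_comp,
    show (sigmaE e).comp (sigmaE e) = LinearMap.id from LinearMap.ext (sigmaE_involutive e),
    Submodule.map_id] at h

lemma feasible_map_sigmaE (L : Submodule (ZMod 2) (V E)) (e : E) (Y : Finset E) :
    Feasible (L.map (sigmaE e)) Y ↔ Feasible L (Y ∆ {e}) := by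
  rw [Feasible, Feasible, ← map_sigmaE_coordSpan e Y, ← Submodule.map_inf _ (sigmaE_injective e)]
  exact (Submodule.map_injective_of_injective (sigmaE_injective e)).eq_iff' (Submodule.map_bot _)

theorem stmt6_general (L : Submodule (ZMod 2) (V E)) (e : E) :
    nu (L.map (sigmaE e)) = (· ∆ ({e} : Finset E)) '' nu L ∧
    ∀ Y : Finset E, Feasible (L.map (sigmaE e)) Y ↔ Feasible L (Y ∆ ({e} : Finset E)) := by
  refine ⟨?_, feasible_map_sigmaE L e⟩
  rw [(symmDiff_left_involutive _).image_eq_preimage_symm]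
  ext Y
  exact feasible_map_sigmaE L e Y

/-- `ν_E(L * e) = ν_E(L) * {e}`; equivalently, `Y` is feasible for
`ν_E(L * e)` iff `Y ∆ {e}` is feasible for `ν_E(L)`. -/
theorem stmt6 (L : Submodule (ZMod 2) (V E)) (hL : IsLagrangian L) (e : E) :
    nu (L.map (sigmaE e)) = (· ∆ ({e} : Finset E)) '' nu L ∧
    ∀ Y : Finset E, Feasible (L.map (sigmaE e)) Y ↔ Feasible L (Y ∆ ({e} : Finset E)) :=
  stmt6_general L e
end

section
/- Let E be a finite set and L ⊆ V_E a graphic Lagrangian subspace with distinguished vectors v_e ∈ L (ω(v_e, e) = 1, ω(v_e, e') = 0 for e' ∈ E \ {e}). Then the E×E matrix A(L) over 𝔽₂ with entries A(L)_{e,e'} = ω(v_e, e'^∨) is symmetric: ω(v_e, e'^∨) = ω(v_{e'}, e^∨) for all e, e' ∈ E. -/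
open Finset
open scoped symmDiff

variable {E : Type*} [Fintype E] [DecidableEq E]

theorem omegaForm_baseV (u : V E) (e : E) : omegaForm u (baseV e) = u.2 e := by
  simp [omegaForm, baseV, Pi.single_apply]

theorem omegaForm_dualV (u : V E) (e : E) : omegaForm u (dualV e) = u.1 e := by
  simp [omegaForm, dualV, Pi.single_apply]

theorem snd_eq_single_of_omegaForm_baseV {u : V E} {e : E} (he : omegaForm u (baseV e) = 1)
    (hne : ∀ e' : E, e' ≠ e → omegaForm u (baseV e') = 0) : u.2 = Pi.single e 1 := by
  funext f
  rcases eq_or_ne f e with rfl | hf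
  · rw [Pi.single_eq_same, ← omegaForm_baseV, he]
  · rw [Pi.single_eq_of_ne hf, ← omegaForm_baseV, hne f hf]

theorem omegaForm_of_snd_eq_single {u w : V E} {e e' : E} (hu : u.2 = Pi.single e 1)
    (hw : w.2 = Pi.single e' 1) : omegaForm u w = u.1 e' + w.1 e := by
  simp [omegaForm, hu, hw, Pi.single_apply, Finset.sum_add_distrib]

theorem stmt11_general (L : Submodule (ZMod 2) (V E)) (hL : IsLagrangian L)
    (v : E → V E)
    (hv : ∀ e : E, v e ∈ L ∧ omegaForm (v e) (baseV e) = 1 ∧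
      ∀ e' : E, e' ≠ e → omegaForm (v e) (baseV e') = 0) :
    ∀ e e' : E, omegaForm (v e) (dualV e') = omegaForm (v e') (dualV e) := by
  intro e e'
  have hsnd (f : E) : (v f).2 = Pi.single f 1 :=
    snd_eq_single_of_omegaForm_baseV (hv f).2.1 (hv f).2.2
  have hiso : omegaForm (v e) (v e') = 0 := hL.1 _ (hv e).1 _ (hv e').1
  rw [omegaForm_of_snd_eq_single (hsnd e) (hsnd e')] at hiso
  rw [omegaForm_dualV, omegaForm_dualV]
  exact CharTwo.add_eq_zero.mp hiso

/-- the matrix `A(L)_{e,e'} = ω(v_e, e'^∨)` of a graphic Lagrangian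
subspace is symmetric. -/
theorem stmt11 (L : Submodule (ZMod 2) (V E)) (hL : IsLagrangian L) (hG : IsGraphic L)
    (v : E → V E)
    (hv : ∀ e : E, v e ∈ L ∧ omegaForm (v e) (baseV e) = 1 ∧
      ∀ e' : E, e' ≠ e → omegaForm (v e) (baseV e') = 0) :
    ∀ e e' : E, omegaForm (v e) (dualV e') = omegaForm (v e') (dualV e) :=
  stmt11_general L hL v hv
end

section
/- Let E₁ and E₂ be disjoint finite sets, and let L₁ ⊆ V_{E₁} and L₂ ⊆ V_{E₂} be Lagrangian subspaces. Then, under the canonical identification V_{E₁ ⊔ E₂} ≅ V_{E₁} × V_{E₂} (an isomorphism of symplectic spaces, the form being the sum of the two forms), the direct sum L₁ × L₂ is a Lagrangian subspace of V_{E₁ ⊔ E₂}, and ν_{E₁ ⊔ E₂}(L₁ × L₂) is the direct sum of the set systems ν_{E₁}(L₁) and ν_{E₂}(L₂): a subset Y ⊆ E₁ ⊔ E₂ is feasible for ν_{E₁ ⊔ E₂}(L₁ × L₂) if and only if Y ∩ E₁ is feasible for ν_{E₁}(L₁) and Y ∩ E₂ is feasible for ν_{E₂}(L₂). -/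
open Finset
open scoped symmDiff

variable {E : Type*} [Fintype E] [DecidableEq E]

/-- The canonical identification `V E₁ × V E₂ ≃ V (E₁ ⊕ E₂)` (as a linear map). -/
def iotaSum {E₁ E₂ : Type*} : (V E₁ × V E₂) →ₗ[ZMod 2] V (E₁ ⊕ E₂) where
  toFun p := (Sum.elim p.1.1 p.2.1, Sum.elim p.1.2 p.2.2)
  map_add' u v := by apply Prod.ext <;> funext f <;> cases f <;> rfl
  map_smul' c u := by apply Prod.ext <;> funext f <;> cases f <;> rfl

/-! `iotaSum` is injective, splits the form as a sum, and maps the product of the coordinate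
spans of `Y ∩ E₁` and `Y ∩ E₂` onto the coordinate span of `Y`. Intersections of product
submodules are computed factorwise and a product is zero iff both factors are, so feasibility
of `Y` splits into feasibility of its two halves. -/

theorem Submodule.finrank_prod {K M N : Type*} [DivisionRing K] [AddCommGroup M] [Module K M]
    [AddCommGroup N] [Module K N] [FiniteDimensional K M] [FiniteDimensional K N]
    (p : Submodule K M) (q : Submodule K N) :
    Module.finrank K (p.prod q) = Module.finrank K p + Module.finrank K q := by
  have h := LinearMap.finrank_range_of_inj (f := p.subtype.prodMap q.subtype)
    (Prod.map_injective.mpr ⟨p.injective_subtype, q.injective_subtype⟩)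
  rwa [LinearMap.range_prodMap, Submodule.range_subtype, Submodule.range_subtype,
    Module.finrank_prod] at h

section DisjointSum

variable {E₁ E₂ : Type*}

@[simp]
lemma iotaSum_apply (p : V E₁ × V E₂) :
    iotaSum p = (Sum.elim p.1.1 p.2.1, Sum.elim p.1.2 p.2.2) :=
  rfl

lemma iotaSum_injective : Function.Injective (iotaSum : V E₁ × V E₂ →ₗ[ZMod 2] V (E₁ ⊕ E₂)) :=
  Function.LeftInverse.injective (g := fun w => ((w.1 ∘ Sum.inl, w.2 ∘ Sum.inl),
    (w.1 ∘ Sum.inr, w.2 ∘ Sum.inr))) fun _ => rfl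

section

variable [DecidableEq E₁] [DecidableEq E₂]

@[simp]
lemma iotaSum_inl_baseV (e : E₁) :
    iotaSum (LinearMap.inl (ZMod 2) (V E₁) (V E₂) (baseV e)) = baseV (Sum.inl e) := by
  ext (f | f) <;> simp [baseV, Pi.single_apply]

@[simp]
lemma iotaSum_inr_baseV (e : E₂) :
    iotaSum (LinearMap.inr (ZMod 2) (V E₁) (V E₂) (baseV e)) = baseV (Sum.inr e) := by
  ext (f | f) <;> simp [baseV, Pi.single_apply]

@[simp]
lemma iotaSum_inl_dualV (e : E₁) :
    iotaSum (LinearMap.inl (ZMod 2) (V E₁) (V E₂) (dualV e)) = dualV (Sum.inl e) := by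
  ext (f | f) <;> simp [dualV, Pi.single_apply]

@[simp]
lemma iotaSum_inr_dualV (e : E₂) :
    iotaSum (LinearMap.inr (ZMod 2) (V E₁) (V E₂) (dualV e)) = dualV (Sum.inr e) := by
  ext (f | f) <;> simp [dualV, Pi.single_apply]

end

variable [Fintype E₁] [Fintype E₂]

lemma omegaForm_iotaSum (u v : V E₁ × V E₂) :
    omegaForm (iotaSum u) (iotaSum v) = omegaForm u.1 v.1 + omegaForm u.2 v.2 := by
  simp only [omegaForm, iotaSum_apply, Fintype.sum_sum_type, Sum.elim_inl, Sum.elim_inr]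

lemma IsLagrangian.map_iotaSum_prod {L₁ : Submodule (ZMod 2) (V E₁)}
    {L₂ : Submodule (ZMod 2) (V E₂)} (h₁ : IsLagrangian L₁) (h₂ : IsLagrangian L₂) :
    IsLagrangian ((L₁.prod L₂).map iotaSum) := by
  constructor
  · rintro _ ⟨u, ⟨hu₁, hu₂⟩, rfl⟩ _ ⟨v, ⟨hv₁, hv₂⟩, rfl⟩
    rw [omegaForm_iotaSum, h₁.1 _ hu₁ _ hv₁, h₂.1 _ hu₂ _ hv₂, add_zero]
  · rw [← (Submodule.equivMapOfInjective _ iotaSum_injective _).finrank_eq,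
      Submodule.finrank_prod, h₁.2, h₂.2, Fintype.card_sum]

variable [DecidableEq E₁] [DecidableEq E₂]

lemma map_iotaSum_coordSpan_prod (Y : Finset (E₁ ⊕ E₂)) :
    ((coordSpan Y.toLeft).prod (coordSpan Y.toRight)).map iotaSum = coordSpan Y := by
  rw [coordSpan, coordSpan, coordSpan, ← LinearMap.span_inl_union_inr, Submodule.map_span]
  congr 1
  ext v
  simp only [Set.image_union, Set.image_image, Set.mem_union, Set.mem_image, iotaSum_inl_baseV,
    iotaSum_inr_baseV, iotaSum_inl_dualV, iotaSum_inr_dualV, Sum.exists, Finset.coe_compl,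
    Set.mem_compl_iff, Finset.mem_coe, Finset.mem_toLeft, Finset.mem_toRight]
  exact or_or_or_comm

lemma feasible_map_iotaSum_prod_iff (L₁ : Submodule (ZMod 2) (V E₁))
    (L₂ : Submodule (ZMod 2) (V E₂)) (Y : Finset (E₁ ⊕ E₂)) :
    Feasible ((L₁.prod L₂).map iotaSum) Y ↔ Feasible L₁ Y.toLeft ∧ Feasible L₂ Y.toRight := by
  rw [Feasible, Feasible, Feasible, ← map_iotaSum_coordSpan_prod,
    ← Submodule.map_inf _ iotaSum_injective,
    (Submodule.map_injective_of_injective iotaSum_injective).eq_iff' (Submodule.map_bot _),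
    Submodule.prod_inf_prod, Submodule.prod_eq_bot_iff]

end DisjointSum

/-- under the canonical identification `V_{E₁ ⊔ E₂} ≅ V_{E₁} × V_{E₂}`
(which matches the symplectic forms), the direct sum `L₁ × L₂` of Lagrangian subspaces is
Lagrangian, and `ν_{E₁ ⊔ E₂}(L₁ × L₂)` is the direct sum of the set systems `ν_{E₁}(L₁)`
and `ν_{E₂}(L₂)`: `Y` is feasible iff `Y ∩ E₁` and `Y ∩ E₂` are feasible. -/
theorem stmt17 {E₁ E₂ : Type*} [Fintype E₁] [DecidableEq E₁] [Fintype E₂] [DecidableEq E₂]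
    (L₁ : Submodule (ZMod 2) (V E₁)) (L₂ : Submodule (ZMod 2) (V E₂))
    (h₁ : IsLagrangian L₁) (h₂ : IsLagrangian L₂) :
    (∀ u v : V E₁ × V E₂,
        omegaForm (iotaSum u) (iotaSum v) = omegaForm u.1 v.1 + omegaForm u.2 v.2) ∧
    IsLagrangian ((L₁.prod L₂).map iotaSum) ∧
    ∀ Y : Finset (E₁ ⊕ E₂),
      Feasible ((L₁.prod L₂).map iotaSum) Y ↔
        (Feasible L₁ Y.toLeft ∧ Feasible L₂ Y.toRight) :=
  ⟨omegaForm_iotaSum, h₁.map_iotaSum_prod h₂, feasible_map_iotaSum_prod_iff L₁ L₂⟩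
end
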